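/- Let λ > 0 and let (A_l)_{l ∈ ℤ} be a family of mutually independent {0,1}-valued random variables on a probability space with Pr{A_l = 1} = a_l, where a_l ∈ (0,1) for every l. If the series Σ_{l ∈ ℤ} 2^l · A_l converges almost surely and the law of its sum is the exponential distribution with rate λ, then a_l = 1/(1 + e^{λ·2^l}) for every l ∈ ℤ. -/

import Mathlib

/-!
Off the countable set of dyadic rationals a binary expansion is unique, and the digit of `x` at
position `m` is the parity of `⌊x / 2 ^ m⌋`. The exponential law has no atoms, so almost surely
`A m = 1` exactly when `⌊X / 2 ^ m⌋` is odd, `X` being the sum of the series, and `P {A m = 1}` is the exponential mass of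
`⋃ n, [(2n+1) 2^m, (2n+2) 2^m)`, a geometric series with sum `1 / (1 + exp (λ 2^m))`.
-/

open MeasureTheory ProbabilityTheory Real Set Filter Function

lemma exists_intCast_eq_tsum {f : ℕ → ℝ} (hf : Summable f) (hint : ∀ n, ∃ z : ℤ, f n = z) :
    ∃ z : ℤ, ∑' n, f n = z := by
  choose z hz using hint
  have hfin : (Function.support f).Finite := by
    refine (eventually_cofinite.mp (hf.tendsto_cofinite_zero.eventually
      (Metric.ball_mem_nhds 0 one_pos))).subset fun n hn hlt => hn ?_
    simp only [dist_zero_right, hz, Int.norm_cast_real, Int.norm_eq_abs, Int.cast_eq_zero] at hlt ⊢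
    exact Int.abs_lt_one_iff.mp (by exact_mod_cast hlt)
  refine ⟨∑ n ∈ hfin.toFinset, z n, ?_⟩
  rw [tsum_eq_sum' hfin.coe_toFinset.superset]
  push_cast
  exact Finset.sum_congr rfl fun n _ => hz n

lemma tsum_two_zpow_neg_succ_mul_le_one {d : ℕ → ℝ} (hd0 : ∀ n, 0 ≤ d n) (hd1 : ∀ n, d n ≤ 1) :
    ∑' n : ℕ, (2 : ℝ) ^ (-((n : ℤ) + 1)) * d n ≤ 1 := by
  have hle (n : ℕ) : (2 : ℝ) ^ (-((n : ℤ) + 1)) * d n ≤ 1 / 2 / 2 ^ n := by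
    rw [zpow_neg, zpow_add_one₀ two_ne_zero, zpow_natCast]
    calc _ ≤ ((2 : ℝ) ^ n * 2)⁻¹ * 1 := by gcongr; exact hd1 n
      _ = _ := by ring
  have hsum := summable_geometric_two' 1
  calc _ ≤ ∑' n : ℕ, (1 : ℝ) / 2 / 2 ^ n :=
        (hsum.of_nonneg_of_le (fun n => mul_nonneg (by positivity) (hd0 n)) hle).tsum_le_tsum hle hsum
    _ = 1 := tsum_geometric_two' 1

section BinaryDigits

variable {b : ℤ → ℝ}

lemma odd_floor_tsum_iff (hb : ∀ l, b l = 0 ∨ b l = 1)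
    (hs : Summable fun l : ℤ => (2 : ℝ) ^ l * b l)
    (hx : ∀ k : ℤ, ∑' l : ℤ, (2 : ℝ) ^ l * b l ≠ k) :
    Odd ⌊∑' l : ℤ, (2 : ℝ) ^ l * b l⌋ ↔ b 0 = 1 := by
  have hb_mem : ∀ l, 0 ≤ b l ∧ b l ≤ 1 := fun l => by rcases hb l with h | h <;> simp [h]
  have hhigh : Summable fun n : ℕ => (2 : ℝ) ^ (n : ℤ) * b n :=
    hs.comp_injective Nat.cast_injective
  have hlow : Summable fun n : ℕ => (2 : ℝ) ^ (-((n : ℤ) + 1)) * b (-((n : ℤ) + 1)) :=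
    hs.comp_injective fun m n h => by simpa using h
  have hhigh_succ : Summable fun n : ℕ => (2 : ℝ) ^ n * b (n + 1) := by
    refine (((summable_nat_add_iff 1).mpr hhigh).div_const 2).congr fun n => ?_
    push_cast
    rw [zpow_add_one₀ two_ne_zero, zpow_natCast]
    ring
  obtain ⟨k, hk⟩ := exists_intCast_eq_tsum hhigh_succ fun n => by
    rcases hb (n + 1) with h | h
    · exact ⟨0, by simp [h]⟩
    · exact ⟨2 ^ n, by simp [h]⟩
  set t := ∑' n : ℕ, (2 : ℝ) ^ (-((n : ℤ) + 1)) * b (-((n : ℤ) + 1))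
  have ht_nonneg : 0 ≤ t := tsum_nonneg fun n => mul_nonneg (by positivity) (hb_mem _).1
  have ht_le : t ≤ 1 :=
    tsum_two_zpow_neg_succ_mul_le_one (fun n => (hb_mem _).1) fun n => (hb_mem _).2
  have hsplit : ∑' l : ℤ, (2 : ℝ) ^ l * b l = b 0 + 2 * k + t := by
    rw [tsum_of_nat_of_neg_add_one (f := fun l : ℤ => (2 : ℝ) ^ l * b l) hhigh hlow]
    rw [hhigh.tsum_eq_zero_add, ← hk, ← tsum_mul_left]
    congr 2
    · simp
    · refine tsum_congr fun n => ?_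
      push_cast
      rw [zpow_add_one₀ two_ne_zero, zpow_natCast]
      ring
  have ht_lt : t < 1 := by
    refine ht_le.lt_of_ne fun h => ?_
    rcases hb 0 with h0 | h0
    · exact hx (2 * k + 1) (by rw [hsplit, h0, h]; push_cast; ring)
    · exact hx (2 * k + 2) (by rw [hsplit, h0, h]; push_cast; ring)
  rcases hb 0 with h0 | h0
  · have : ⌊∑' l : ℤ, (2 : ℝ) ^ l * b l⌋ = 2 * k := by
      rw [Int.floor_eq_iff, hsplit, h0]; push_cast; constructor <;> linarith
    simp [this, h0]
  · have : ⌊∑' l : ℤ, (2 : ℝ) ^ l * b l⌋ = 2 * k + 1 := by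
      rw [Int.floor_eq_iff, hsplit, h0]; push_cast; constructor <;> linarith
    simp [this, h0]

def dyadicRationals : Set ℝ := range fun p : ℤ × ℤ => (p.1 : ℝ) * 2 ^ p.2

lemma countable_dyadicRationals : dyadicRationals.Countable := countable_range _

lemma tsum_zpow_two_mul_add_eq_div (m : ℤ) :
    ∑' l : ℤ, (2 : ℝ) ^ l * b (l + m) = (∑' l : ℤ, (2 : ℝ) ^ l * b l) / 2 ^ m := by
  rw [← tsum_div_const, ← (Equiv.addRight m).tsum_eq (fun l => (2 : ℝ) ^ l * b l / 2 ^ m)]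
  refine tsum_congr fun l => ?_
  rw [Equiv.coe_addRight, zpow_add₀ two_ne_zero]
  field_simp

lemma odd_floor_tsum_div_zpow_iff (hb : ∀ l, b l = 0 ∨ b l = 1)
    (hs : Summable fun l : ℤ => (2 : ℝ) ^ l * b l)
    (hx : ∑' l : ℤ, (2 : ℝ) ^ l * b l ∉ dyadicRationals) (m : ℤ) :
    Odd ⌊(∑' l : ℤ, (2 : ℝ) ^ l * b l) / 2 ^ m⌋ ↔ b m = 1 := by
  have hs_shift : Summable fun l : ℤ => (2 : ℝ) ^ l * b (l + m) := by
    refine (((Equiv.addRight m).summable_iff.mpr hs).div_const (2 ^ m)).congr fun l => ?_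
    rw [Function.comp_apply, Equiv.coe_addRight, zpow_add₀ two_ne_zero]
    field_simp
  rw [← tsum_zpow_two_mul_add_eq_div]
  simpa using odd_floor_tsum_iff (b := fun l => b (l + m)) (fun l => hb _) hs_shift
    fun k hk => hx ⟨(k, m), by
      rw [eq_comm, ← div_eq_iff (by positivity), ← tsum_zpow_two_mul_add_eq_div, hk]⟩

end BinaryDigits

lemma hasSum_pow_odd_sub_pow_even {u : ℝ} (h0 : 0 ≤ u) (h1 : u < 1) :
    HasSum (fun n : ℕ => u ^ (2 * n + 1) - u ^ (2 * n + 2)) (u / (1 + u)) := by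
  have hterm : ∀ n : ℕ, u ^ (2 * n + 1) - u ^ (2 * n + 2) = (u - u ^ 2) * (u ^ 2) ^ n :=
    fun n => by ring
  have hsum : (u - u ^ 2) * (1 - u ^ 2)⁻¹ = u / (1 + u) := by
    have : 1 - u ^ 2 ≠ 0 := by nlinarith
    field_simp
    ring
  rw [funext hterm, ← hsum]
  exact (hasSum_geometric_of_lt_one (sq_nonneg u) (by nlinarith)).mul_left (u - u ^ 2)

section Exponential

variable {r : ℝ}

instance nullSingletonClass_expMeasure : NullSingletonClass (expMeasure r) := by
  unfold expMeasure gammaMeasure; infer_instance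

lemma expMeasure_Iio_zero : expMeasure r (Iio 0) = 0 := by
  rw [expMeasure, gammaMeasure, withDensity_apply _ measurableSet_Iio]
  exact lintegral_exponentialPDF_of_nonpos le_rfl

lemma expMeasure_Ioc (hr : 0 < r) {p q : ℝ} (hp : 0 ≤ p) (hpq : p ≤ q) :
    expMeasure r (Ioc p q) = ENNReal.ofReal (exp (-(r * p)) - exp (-(r * q))) := by
  have := isProbabilityMeasure_expMeasure hr
  rw [← measure_cdf (expMeasure r), StieltjesFunction.measure_Ioc, cdf_expMeasure_eq hr,
    cdf_expMeasure_eq hr, if_pos hp, if_pos (hp.trans hpq)]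
  ring_nf

lemma setOf_odd_floor_div_inter_Ici {c : ℝ} (hc : 0 < c) :
    {x : ℝ | Odd ⌊x / c⌋} ∩ Ici 0 = ⋃ n : ℕ, Ico ((2 * n + 1) * c) ((2 * n + 2) * c) := by
  ext x
  simp only [mem_inter_iff, mem_ofPred_eq, mem_Ici, mem_iUnion, mem_Ico]
  constructor
  · rintro ⟨⟨j, hj⟩, hx⟩
    have hj0 : 0 ≤ j := by
      have := Int.floor_nonneg.mpr (div_nonneg hx hc.le)
      omega
    refine ⟨j.toNat, ?_⟩
    have hfloor := Int.floor_eq_iff.mp hj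
    rw [le_div_iff₀ hc, div_lt_iff₀ hc] at hfloor
    have hcast : ((j.toNat : ℕ) : ℝ) = j := by exact_mod_cast Int.toNat_of_nonneg hj0
    rw [hcast]
    push_cast at hfloor
    constructor <;> linarith
  · rintro ⟨n, hlo, hhi⟩
    refine ⟨⟨n, Int.floor_eq_iff.mpr ?_⟩, le_trans (by positivity) hlo⟩
    rw [le_div_iff₀ hc, div_lt_iff₀ hc]
    push_cast
    constructor <;> linarith

lemma pairwise_disjoint_Ico_odd_mul {c : ℝ} (hc : 0 < c) :
    Pairwise (Disjoint on fun n : ℕ => Ico ((2 * n + 1) * c) ((2 * n + 2) * c)) := by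
  intro m n hmn
  rw [Function.onFun, Set.disjoint_left]
  rintro x ⟨hm1, hm2⟩ ⟨hn1, hn2⟩
  have hmn' : m < n + 1 := by exact_mod_cast (show (m : ℝ) < n + 1 by nlinarith)
  have hnm' : n < m + 1 := by exact_mod_cast (show (n : ℝ) < m + 1 by nlinarith)
  omega

lemma expMeasure_setOf_odd_floor_div (hr : 0 < r) {c : ℝ} (hc : 0 < c) :
    expMeasure r {x : ℝ | Odd ⌊x / c⌋} = ENNReal.ofReal (1 / (1 + exp (r * c))) := by
  set u := exp (-(r * c)) with hu
  have hu1 : u < 1 := exp_lt_one_iff.mpr (by nlinarith)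
  have hsum := hasSum_pow_odd_sub_pow_even (exp_pos _).le hu1
  have hIoc (n : ℕ) : expMeasure r (Ico ((2 * n + 1) * c) ((2 * n + 2) * c)) =
      ENNReal.ofReal (u ^ (2 * n + 1) - u ^ (2 * n + 2)) := by
    rw [measure_congr Ico_ae_eq_Ioc, expMeasure_Ioc hr (by positivity) (by gcongr; linarith),
      hu, ← exp_nat_mul, ← exp_nat_mul]
    push_cast
    ring_nf
  calc expMeasure r {x : ℝ | Odd ⌊x / c⌋}
      = expMeasure r ({x : ℝ | Odd ⌊x / c⌋} ∩ Ici 0) :=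
        (measure_inter_conull (by rw [compl_Ici, expMeasure_Iio_zero])).symm
    _ = ∑' n : ℕ, ENNReal.ofReal (u ^ (2 * n + 1) - u ^ (2 * n + 2)) := by
        rw [setOf_odd_floor_div_inter_Ici hc,
          measure_iUnion (pairwise_disjoint_Ico_odd_mul hc) fun _ => measurableSet_Ico]
        exact tsum_congr hIoc
    _ = ENNReal.ofReal (u / (1 + u)) := by
        rw [← ENNReal.ofReal_tsum_of_nonneg (fun n => ?_) hsum.summable, hsum.tsum_eq]
        exact sub_nonneg.mpr (pow_le_pow_of_le_one (exp_pos _).le hu1.le (by omega))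
    _ = ENNReal.ofReal (1 / (1 + exp (r * c))) := by
        rw [hu, exp_neg]
        field_simp
        ring_nf

end Exponential

theorem binary_expansion_of_exponential_only_if
    {Ω : Type*} [MeasurableSpace Ω] (P : Measure Ω)
    (lam : ℝ) (hlam : 0 < lam) (A : ℤ → Ω → ℝ) (a : ℤ → ℝ)
    (h01 : ∀ (l : ℤ) (ω : Ω), A l ω = 0 ∨ A l ω = 1)
    (hprob : ∀ l : ℤ, P {ω | A l ω = 1} = ENNReal.ofReal (a l))
    (hsum : ∀ᵐ ω ∂P, Summable fun l : ℤ => (2 : ℝ) ^ l * A l ω)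
    (hlaw : P.map (fun ω => ∑' l : ℤ, (2 : ℝ) ^ l * A l ω) = expMeasure lam) :
    ∀ l : ℤ, a l = 1 / (1 + Real.exp (lam * 2 ^ l)) := by
  intro m
  set X := fun ω => ∑' l : ℤ, (2 : ℝ) ^ l * A l ω
  have := isProbabilityMeasure_expMeasure hlam
  have hX : AEMeasurable X P := by
    by_contra h
    rw [Measure.map_of_not_aemeasurable h] at hlaw
    exact IsProbabilityMeasure.ne_zero _ hlaw.symm
  have hX_not_dyadic : ∀ᵐ ω ∂P, X ω ∉ dyadicRationals :=
    (ae_map_iff hX countable_dyadicRationals.measurableSet.compl).mp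
      (hlaw ▸ countable_dyadicRationals.ae_notMem _)
  have hdigit : {ω | A m ω = 1} =ᵐ[P] X ⁻¹' {x | Odd ⌊x / 2 ^ m⌋} := by
    refine eventuallyEq_set.mpr ?_
    filter_upwards [hsum, hX_not_dyadic] with ω hs hω
    exact (odd_floor_tsum_div_zpow_iff (h01 · ω) hs hω m).symm
  have hE : MeasurableSet {x : ℝ | Odd ⌊x / 2 ^ m⌋} :=
    (measurable_id.div_const _).floor (MeasurableSet.of_discrete (s := {n : ℤ | Odd n}))
  have hlaw_m : ENNReal.ofReal (a m) = ENNReal.ofReal (1 / (1 + exp (lam * 2 ^ m))) := by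
    rw [← hprob, measure_congr hdigit, ← Measure.map_apply_of_aemeasurable hX hE, hlaw,
      expMeasure_setOf_odd_floor_div hlam (by positivity)]
  have hpos : 0 < 1 / (1 + exp (lam * 2 ^ m)) := by positivity
  have ha_pos : 0 < a m := ENNReal.ofReal_pos.mp (hlaw_m ▸ ENNReal.ofReal_pos.mpr hpos)
  exact (ENNReal.ofReal_eq_ofReal_iff ha_pos.le hpos.le).mp hlaw_m
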